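/- An interval matrix (a 0-1 matrix in which, in each column, the 1-entries appear in consecutive rows) is totally unimodular. -/
import Mathlib

/-- Key lemma: a square 0-1 matrix whose columns are interval columns has
determinant in `{-1, 0, 1}`. -/
lemma interval_det_aux : ∀ (k : ℕ) (B : Matrix (Fin k) (Fin k) ℚ),
    (∀ i j, B i j = 0 ∨ B i j = 1) →
    (∀ j (i₁ i₂ i₃ : Fin k), i₁ ≤ i₂ → i₂ ≤ i₃ →
      B i₁ j = 1 → B i₃ j = 1 → B i₂ j = 1) →
    B.det ∈ Set.range SignType.cast := by
  intro k
  induction k with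
  | zero =>
    intro B _ _
    exact ⟨1, by simp [Matrix.det_fin_zero]⟩
  | succ k ih =>
    intro B h01 hint
    by_cases hrow : ∀ j, B 0 j = 0
    · exact ⟨0, by simp [Matrix.det_eq_zero_of_row_eq_zero 0 hrow]⟩
    · push_neg at hrow
      -- the set of columns whose interval contains row 0
      set T : Finset (Fin (k + 1)) := {j | B 0 j = 1} with hT
      have hTmem : ∀ j, j ∈ T ↔ B 0 j = 1 := by
        intro j; simp [hT]
      have hTne : T.Nonempty := by
        obtain ⟨j, hj⟩ := hrow
        exact ⟨j, (hTmem j).mpr ((h01 0 j).resolve_left hj)⟩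
      -- the top of the interval of column `j`
      have htopex : ∀ j ∈ T, ({i | B i j = 1} : Finset (Fin (k+1))).Nonempty := by
        intro j hj
        exact ⟨0, by simpa using (hTmem j).mp hj⟩
      classical
      let top : Fin (k + 1) → Fin (k + 1) := fun j =>
        if h : ({i | B i j = 1} : Finset (Fin (k+1))).Nonempty
        then ({i | B i j = 1} : Finset (Fin (k+1))).max' h else 0
      have htop1 : ∀ j ∈ T, B (top j) j = 1 := by
        intro j hj
        have h := htopex j hj
        have := Finset.max'_mem _ h
        simp only [Finset.mem_filter, Finset.mem_univ] at this
        simpa [top, h] using this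
      have htop_iff : ∀ j ∈ T, ∀ i, B i j = 1 ↔ i ≤ top j := by
        intro j hj i
        constructor
        · intro hi
          have h := htopex j hj
          have : i ∈ ({i | B i j = 1} : Finset (Fin (k+1))) := by
            simp [hi]
          simpa [top, h] using Finset.le_max' _ i this
        · intro hi
          exact hint j 0 i (top j) (Fin.zero_le i) hi ((hTmem j).mp hj) (htop1 j hj)
      -- choose the column in T with minimal top
      obtain ⟨j₀, hj₀T, hj₀min⟩ := T.exists_min_image top hTne
      -- subtract column j₀ from every other column in T
      set c : Fin (k + 1) → ℚ := fun j => if j ≠ j₀ ∧ j ∈ T then 1 else 0 with hc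
      set B' : Matrix (Fin (k + 1)) (Fin (k + 1)) ℚ :=
        fun i j => B i j - c j * B i j₀ with hB'
      -- containment: the interval of j₀ is contained in that of any j ∈ T
      have hsub : ∀ j ∈ T, ∀ i, B i j₀ = 1 → B i j = 1 := by
        intro j hj i hi
        rw [htop_iff j hj i]
        exact le_trans ((htop_iff j₀ hj₀T i).mp hi) (hj₀min j hj)
      have hdet : B.det = B'.det := by
        rw [← Matrix.det_transpose B, ← Matrix.det_transpose B']
        apply Matrix.det_eq_of_forall_row_eq_smul_add_const c j₀ (by simp [hc])
        intro i j
        have : B' j i = B j i - c i * B j j₀ := rfl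
        have hj0 : B' j j₀ = B j j₀ := by simp [hB', hc]
        simp only [Matrix.transpose_apply, this, hj0]
        ring
      -- B' is 0-1
      have h01' : ∀ i j, B' i j = 0 ∨ B' i j = 1 := by
        intro i j
        by_cases hj : j ≠ j₀ ∧ j ∈ T
        · have hcj : c j = 1 := by simp [hc, hj]
          rcases h01 i j₀ with h0 | h1
          · simp only [hB', hcj, h0]
            rcases h01 i j with h | h <;> simp [h]
          · left
            have := hsub j hj.2 i h1
            simp [hB', hcj, this, h1]
        · have hcj : c j = 0 := by simp [hc, hj]
          simpa [hB', hcj] using h01 i j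
      -- B' has interval columns
      have hint' : ∀ j (i₁ i₂ i₃ : Fin (k+1)), i₁ ≤ i₂ → i₂ ≤ i₃ →
          B' i₁ j = 1 → B' i₃ j = 1 → B' i₂ j = 1 := by
        intro j i₁ i₂ i₃ h12 h23 hb1 hb3
        by_cases hj : j ≠ j₀ ∧ j ∈ T
        · have hcj : c j = 1 := by simp [hc, hj]
          simp only [hB', hcj, one_mul] at hb1 hb3 ⊢
          -- B i₁ j = 1 and B i₁ j₀ = 0, similarly for i₃
          have hB1 : B i₁ j = 1 := by
            rcases h01 i₁ j with h | h
            · exfalso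
              rcases h01 i₁ j₀ with h' | h' <;> rw [h, h'] at hb1 <;> norm_num at hb1
            · exact h
          have hB10 : B i₁ j₀ = 0 := by
            rcases h01 i₁ j₀ with h' | h'
            · exact h'
            · rw [hB1, h'] at hb1; norm_num at hb1
          have hB3 : B i₃ j = 1 := by
            rcases h01 i₃ j with h | h
            · exfalso
              rcases h01 i₃ j₀ with h' | h' <;> rw [h, h'] at hb3 <;> norm_num at hb3
            · exact h
          have hB2 : B i₂ j = 1 := hint j i₁ i₂ i₃ h12 h23 hB1 hB3
          have hB20 : B i₂ j₀ = 0 := by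
            rcases h01 i₂ j₀ with h' | h'
            · exact h'
            · exact absurd (hint j₀ i₁ i₁ i₂ le_rfl h12
                ((htop_iff j₀ hj₀T i₁).mpr (le_trans h12 ((htop_iff j₀ hj₀T i₂).mp h'))) h')
                (by rw [hB10]; norm_num)
          rw [hB2, hB20]; ring
        · have hcj : c j = 0 := by simp [hc, hj]
          simp only [hB', hcj, zero_mul, sub_zero] at hb1 hb3 ⊢
          exact hint j i₁ i₂ i₃ h12 h23 hb1 hb3
      -- row 0 of B' is a unit vector supported at j₀
      have hrow0 : ∀ j, B' 0 j = if j = j₀ then 1 else 0 := by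
        intro j
        by_cases hj : j = j₀
        · subst hj
          simp [hB', hc, (hTmem j).mp hj₀T]
        · by_cases hjT : j ∈ T
          · have hcj : c j = 1 := by simp [hc, hj, hjT]
            simp [hB', hcj, (hTmem j).mp hjT, (hTmem j₀).mp hj₀T, hj]
          · have hcj : c j = 0 := by simp [hc, hj, hjT]
            have : B 0 j = 0 := by
              rcases h01 0 j with h | h
              · exact h
              · exact absurd ((hTmem j).mpr h) hjT
            simp [hB', hcj, this, hj]
      -- Laplace expansion along row 0
      have hexp : B'.det = (-1) ^ (j₀ : ℕ) *
          (B'.submatrix Fin.succ j₀.succAbove).det := by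
        rw [Matrix.det_succ_row_zero]
        rw [Finset.sum_eq_single j₀]
        · rw [hrow0 j₀]; simp
        · intro j _ hj
          rw [hrow0 j]
          simp [hj]
        · intro h; exact absurd (Finset.mem_univ j₀) h
      -- apply induction hypothesis to the minor
      have hminor := ih (B'.submatrix Fin.succ j₀.succAbove)
        (fun i j => h01' (Fin.succ i) (j₀.succAbove j))
        (fun j i₁ i₂ i₃ h12 h23 hb1 hb3 =>
          hint' (j₀.succAbove j) (Fin.succ i₁) (Fin.succ i₂) (Fin.succ i₃)
            (Fin.succ_le_succ_iff.mpr h12) (Fin.succ_le_succ_iff.mpr h23) hb1 hb3)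
      obtain ⟨s, hs⟩ := hminor
      rw [hdet, hexp, ← hs]
      rcases Nat.even_or_odd (j₀ : ℕ) with he | ho
      · exact ⟨s, by rw [he.neg_one_pow, one_mul]⟩
      · exact ⟨-s, by rw [ho.neg_one_pow]; push_cast; ring⟩

/-- An interval matrix (a 0-1 matrix in which, in each column, the 1-entries
appear in consecutive rows) is totally unimodular. -/
theorem interval_matrix_totallyUnimodular {m n : ℕ} (A : Matrix (Fin m) (Fin n) ℚ)
    (h01 : ∀ i j, A i j = 0 ∨ A i j = 1)
    (hinterval : ∀ j (i₁ i₂ i₃ : Fin m), i₁ ≤ i₂ → i₂ ≤ i₃ →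
      A i₁ j = 1 → A i₃ j = 1 → A i₂ j = 1) :
    A.IsTotallyUnimodular := by
  intro k f g hf hg
  -- sort the rows
  set σ : Equiv.Perm (Fin k) := Tuple.sort f with hσ
  have hmono : Monotone (f ∘ σ) := Tuple.monotone_sort f
  set M : Matrix (Fin k) (Fin k) ℚ := A.submatrix (f ∘ σ) g with hM
  have hMdet : M.det ∈ Set.range SignType.cast := by
    apply interval_det_aux
    · intro i j; exact h01 _ _
    · intro j i₁ i₂ i₃ h12 h23 hb1 hb3
      exact hinterval (g j) (f (σ i₁)) (f (σ i₂)) (f (σ i₃))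
        (hmono h12) (hmono h23) hb1 hb3
  have hsub : A.submatrix f g = M.submatrix ⇑σ.symm id := by
    ext i j
    simp [hM, Matrix.submatrix_apply]
  rw [hsub, Matrix.det_permute σ.symm]
  obtain ⟨s, hs⟩ := hMdet
  rcases Int.units_eq_one_or (Equiv.Perm.sign σ.symm) with h | h
  · exact ⟨s, by rw [h, ← hs]; simp⟩
  · exact ⟨-s, by rw [h, ← hs]; push_cast; ring⟩
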